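/- For every positive integer N ≥ 3 and every 1 ≤ k ≤ N-1, the quantity ((N-2k)/(N-k-1))·C(N-3,k-1) is an integer. -/

import Mathlib

/-! With `n = N - 3` and `j = k - 1`, the absorption identity
`C(n, j) (n + 1) = C(n + 1, j) (n + 1 - j)` rewrites `(n + 1 - 2j) C(n, j)` as
`(n + 1 - j) (2 C(n, j) - C(n + 1, j))`, so the anomaly is the integer
`2 C(N - 3, k - 1) - C(N - 2, k - 1)`. -/

theorem Nat.sub_two_mul_mul_choose (n j : ℕ) :
    ((n : ℤ) + 1 - 2 * j) * n.choose j
      = ((n : ℤ) + 1 - j) * (2 * n.choose j - (n + 1).choose j) := by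
  rcases le_or_gt j (n + 1) with hj | hj
  · have absorb : (n.choose j : ℤ) * (n + 1) = (n + 1).choose j * ((n : ℤ) + 1 - j) := by
      exact_mod_cast Nat.choose_mul_succ_eq n j
    linear_combination -absorb
  · simp [Nat.choose_eq_zero_of_lt hj, Nat.choose_eq_zero_of_lt (Nat.lt_of_succ_lt hj)]

theorem Nat.sub_two_mul_div_mul_choose {j n : ℕ} (hj : j ≤ n) :
    ((n : ℚ) + 1 - 2 * j) / ((n : ℚ) + 1 - j) * n.choose j
      = ((2 * n.choose j - (n + 1).choose j : ℤ) : ℚ) := by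
  have hden : (n : ℚ) + 1 - j ≠ 0 := by
    have : (j : ℚ) ≤ n := by exact_mod_cast hj
    linarith
  rw [div_mul_eq_mul_div, div_eq_iff hden]
  exact_mod_cast (Nat.sub_two_mul_mul_choose n j).trans (mul_comm _ _)

theorem su_antisymmetric_cubic_anomaly_is_integer_general (N k : ℕ)
    (hk1 : 1 ≤ k) (hk2 : k ≤ N - 2) :
    ∃ m : ℤ, ((N : ℚ) - 2 * k) / ((N : ℚ) - k - 1) * ((N - 3).choose (k - 1) : ℚ)
      = (m : ℚ) := by
  obtain ⟨j, rfl⟩ : ∃ j, k = j + 1 := ⟨k - 1, by omega⟩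
  obtain ⟨n, rfl⟩ : ∃ n, N = n + j + 3 := ⟨N - j - 3, by omega⟩
  refine ⟨_, Eq.trans ?_ (Nat.sub_two_mul_div_mul_choose (Nat.le_add_left j n))⟩
  simp only [show n + j + 3 - 3 = n + j by omega, Nat.add_sub_cancel]
  push_cast
  ring_nf

/-- For `N ≥ 3` and `1 ≤ k ≤ N-2`, the cubic anomaly coefficient
`C₃ = ((N-2k)/(N-k-1))·C(N-3,k-1)` of the rank-`k` antisymmetric tensor
representation of `SU(N)` is an integer. -/
theorem su_antisymmetric_cubic_anomaly_is_integer (N k : ℕ) (hN : 3 ≤ N)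
    (hk1 : 1 ≤ k) (hk2 : k ≤ N - 2) :
    ∃ m : ℤ, ((N : ℚ) - 2 * k) / ((N : ℚ) - k - 1) * ((N - 3).choose (k - 1) : ℚ)
      = (m : ℚ) :=
  su_antisymmetric_cubic_anomaly_is_integer_general N k hk1 hk2
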